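/- Let P = (P₀,P₁,P₂) be a probability vector on {0,1,2} with P₁ < 1, and set P* = (P₀/(P₀+P₂), 0, P₂/(P₀+P₂)). Let μ^Σ_P be the product probability measure on Σ whose factor at coordinate n ∈ ℤ is P for n ≥ 0 and P* for n < 0. Then μ^Σ_P is an eigenmeasure of the open shift with decay rate Λ = P₀ + P₂ = 1 − P₁. Moreover, P* is the unique probability vector Q on {0,1,2} such that the product measure with factor P at every coordinate n ≥ 0 and factor Q at every coordinate n < 0 is an eigenmeasure of the open shift for some decay rate. -/

import Mathlib

/-!
Shifting a product measure moves every factor one step to the left. With factors `P` on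
`n ≥ 0` and `Q` on `n < 0`, the only factor that changes is the one at `-1`, which becomes `P`,
and restricting to `{ε₀ ≠ 1}` kills its letter `1`. So the open shift sends the product measure
to the same product with the factor `Q` at `-1` replaced by `a ↦ P a · 1[a ≠ 1]`, and the
measure is an eigenmeasure with rate `Λ` exactly when `P a · 1[a ≠ 1] = Λ · Q a` for every
letter `a`. Summing over `a` forces `Λ = P₀ + P₂`, and then `Q = P*`. It suffices to compare the
two finite measures on cylinders fixing the coordinate `-1`: these determine all cylinders by
additivity, and cylinders form a generating π-system.
-/

open MeasureTheory
open scoped ENNReal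

/-- The two-sided shift on `Σ = {0,1,2}^ℤ`. -/
def shiftMap (ε : ℤ → Fin 3) : ℤ → Fin 3 := fun n => ε (n + 1)

/-- `μ` is the product measure on `{0,1,2}^ℤ` with one-site weights `P n` at coordinate `n`:
the measure of every cylinder is the product of the corresponding weights. -/
def IsProductMeasure (μ : Measure (ℤ → Fin 3)) (P : ℤ → Fin 3 → ℝ) : Prop :=
  ∀ (s : Finset ℤ) (g : ℤ → Fin 3),
    μ {ε | ∀ i ∈ s, ε i = g i} = ∏ i ∈ s, ENNReal.ofReal (P i (g i))

/-- `μ` is an eigenmeasure of the open shift (hole `{ε₀ = 1}`) with decay rate `Λ`. -/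
def IsOpenShiftEigenmeasure (μ : Measure (ℤ → Fin 3)) (Λ : ℝ≥0∞) : Prop :=
  ∀ S : Set (ℤ → Fin 3), MeasurableSet S →
    μ (shiftMap ⁻¹' S ∩ {ε | ε 0 ≠ 1}) = Λ * μ S

open Set Function

section Cylinder

variable {ι α : Type*}

def cyl (s : Finset ι) (g : ι → α) : Set (ι → α) := {ε | ∀ i ∈ s, ε i = g i}

lemma cyl_eq_of_mem {s : Finset ι} {g ε : ι → α} (h : ε ∈ cyl s g) :
    cyl s g = cyl s ε := by
  ext x
  exact forall₂_congr fun i hi => by rw [h i hi]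

lemma cyl_union [DecidableEq ι] (s t : Finset ι) (ε : ι → α) :
    cyl (s ∪ t) ε = cyl s ε ∩ cyl t ε := by
  ext x
  simp only [cyl, mem_ofPred_eq, mem_inter_iff, Finset.mem_union, or_imp, forall_and]

lemma cyl_insert_update [DecidableEq ι] {s : Finset ι} {i : ι} (hi : i ∉ s) (g : ι → α)
    (b : α) :
    cyl (insert i s) (update g i b) = (fun ε => ε i) ⁻¹' {b} ∩ cyl s g := by
  ext ε
  simp only [cyl, Finset.forall_mem_insert, update_self, mem_inter_iff, mem_preimage,
    mem_singleton_iff, mem_ofPred_eq]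
  exact and_congr_right fun _ => forall₂_congr fun j hj => by
    rw [update_of_ne (ne_of_mem_of_not_mem hj hi)]

def cylinders : Set (Set (ι → α)) := {S | ∃ s g, S = cyl s g}

lemma isPiSystem_cylinders : IsPiSystem (cylinders : Set (Set (ι → α))) := by
  classical
  rintro _ ⟨s, g, rfl⟩ _ ⟨t, h, rfl⟩ ⟨ε, hεs, hεt⟩
  exact ⟨s ∪ t, ε, by rw [cyl_union, ← cyl_eq_of_mem hεs, ← cyl_eq_of_mem hεt]⟩

variable [MeasurableSpace α] [MeasurableSingletonClass α]

lemma measurableSet_cyl (s : Finset ι) (g : ι → α) : MeasurableSet (cyl s g) :=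
  MeasurableSet.pi s.countable_toSet fun i _ => measurableSet_singleton (g i)

lemma generateFrom_cylinders [Countable α] :
    MeasurableSpace.generateFrom cylinders =
      (MeasurableSpace.pi : MeasurableSpace (ι → α)) := by
  refine le_antisymm (MeasurableSpace.generateFrom_le ?_) (iSup_le fun i => ?_)
  · rintro _ ⟨s, g, rfl⟩
    exact measurableSet_cyl s g
  · rw [← @measurable_iff_comap_le _ _ (MeasurableSpace.generateFrom cylinders)]
    refine @measurable_to_countable' _ _ _ _ (MeasurableSpace.generateFrom cylinders) _ fun a =>
      MeasurableSpace.measurableSet_generateFrom ⟨{i}, fun _ => a, ?_⟩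
    ext ε
    simp [cyl]

lemma measure_cyl_eq_sum_insert [Fintype α] [DecidableEq ι] (m : Measure (ι → α))
    {s : Finset ι} {i : ι} (hi : i ∉ s) (g : ι → α) :
    m (cyl s g) = ∑ b, m (cyl (insert i s) (update g i b)) := by
  simp_rw [cyl_insert_update hi, ← Measure.restrict_apply' (measurableSet_cyl s g)]
  rw [sum_measure_preimage_singleton (μ := m.restrict (cyl s g)) Finset.univ
      (f := fun ε : ι → α => ε i)
      fun b _ => measurable_pi_apply i (measurableSet_singleton b),
    Finset.coe_univ, preimage_univ, Measure.restrict_apply_univ]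

theorem MeasureTheory.Measure.ext_of_cyl_of_mem [Fintype α] [Nonempty α]
    {m₁ m₂ : Measure (ι → α)} [IsFiniteMeasure m₁] (i₀ : ι)
    (h : ∀ s g, i₀ ∈ s → m₁ (cyl s g) = m₂ (cyl s g)) : m₁ = m₂ := by
  classical
  have hcyl : ∀ s g, m₁ (cyl s g) = m₂ (cyl s g) := by
    intro s g
    by_cases hs : i₀ ∈ s
    · exact h s g hs
    · rw [measure_cyl_eq_sum_insert m₁ hs, measure_cyl_eq_sum_insert m₂ hs]
      exact Finset.sum_congr rfl fun b _ => h _ _ (s.mem_insert_self i₀)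
  refine ext_of_generate_finite cylinders generateFrom_cylinders.symm isPiSystem_cylinders
    (fun _ ⟨s, g, hS⟩ => hS ▸ hcyl s g) ?_
  have huniv : (univ : Set (ι → α)) = cyl ∅ fun _ => Classical.arbitrary α := by
    ext
    simp [cyl]
  rw [huniv]
  exact hcyl _ _

end Cylinder

section ProductMeasure

variable {μ : Measure (ℤ → Fin 3)} {w : ℤ → Fin 3 → ℝ}

lemma IsProductMeasure.measure_cyl (hμ : IsProductMeasure μ w) (s : Finset ℤ)
    (g : ℤ → Fin 3) :
    μ (cyl s g) = ∏ i ∈ s, ENNReal.ofReal (w i (g i)) :=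
  hμ s g

lemma IsProductMeasure.measure_cyl_eq_mul_erase (hμ : IsProductMeasure μ w) {s : Finset ℤ}
    {i : ℤ} (hi : i ∈ s) (g : ℤ → Fin 3) :
    μ (cyl s g) = ENNReal.ofReal (w i (g i)) * μ (cyl (s.erase i) g) := by
  rw [hμ.measure_cyl, hμ.measure_cyl,
    Finset.mul_prod_erase s (fun j => ENNReal.ofReal (w j (g j))) hi]

def survivingWeight (p : Fin 3 → ℝ) (a : Fin 3) : ℝ≥0∞ :=
  if a = 1 then 0 else ENNReal.ofReal (p a)

lemma IsProductMeasure.measure_cyl_inter_ne_one (hμ : IsProductMeasure μ w) {s : Finset ℤ}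
    {i : ℤ} (hi : i ∈ s) (g : ℤ → Fin 3) :
    μ (cyl s g ∩ {ε | ε i ≠ 1}) = survivingWeight (w i) (g i) * μ (cyl (s.erase i) g) := by
  unfold survivingWeight
  split_ifs with hg
  · rw [zero_mul]
    exact measure_mono_null (fun ε hε => hε.2 ((hε.1 i hi).trans hg)) measure_empty
  · rw [← hμ.measure_cyl_eq_mul_erase hi, inter_eq_left.2 fun ε hε => (hε i hi).trans_ne hg]

lemma measurable_shiftMap : Measurable shiftMap :=
  measurable_pi_lambda _ fun n => measurable_pi_apply (n + 1)

lemma shiftMap_preimage_cyl (s : Finset ℤ) (g : ℤ → Fin 3) :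
    shiftMap ⁻¹' cyl s g = cyl (s.map (addRightEmbedding 1)) fun j => g (j - 1) := by
  ext ε
  simp [cyl, shiftMap]

lemma IsProductMeasure.map_shiftMap (hμ : IsProductMeasure μ w) :
    IsProductMeasure (μ.map shiftMap) fun n => w (n + 1) := by
  intro s g
  change μ.map shiftMap (cyl s g) = _
  rw [Measure.map_apply measurable_shiftMap (measurableSet_cyl s g), shiftMap_preimage_cyl,
    hμ.measure_cyl, Finset.prod_map]
  simp

end ProductMeasure

def halfWeights (P Q : Fin 3 → ℝ) (n : ℤ) (i : Fin 3) : ℝ := if 0 ≤ n then P i else Q i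

section HalfWeights

variable {P Q : Fin 3 → ℝ} {μ : Measure (ℤ → Fin 3)}

lemma halfWeights_zero : halfWeights P Q 0 = P := by
  funext i
  simp [halfWeights]

lemma halfWeights_neg_one : halfWeights P Q (-1) = Q := by
  funext i
  simp [halfWeights]

lemma halfWeights_add_one {n : ℤ} (hn : n ≠ -1) :
    halfWeights P Q (n + 1) = halfWeights P Q n := by
  have h : 0 ≤ n + 1 ↔ 0 ≤ n := by omega
  funext i
  simp only [halfWeights, h]

lemma IsProductMeasure.map_shiftMap_cyl_of_notMem (hμ : IsProductMeasure μ (halfWeights P Q))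
    {s : Finset ℤ} (hs : -1 ∉ s) (g : ℤ → Fin 3) :
    μ.map shiftMap (cyl s g) = μ (cyl s g) := by
  rw [hμ.map_shiftMap.measure_cyl, hμ.measure_cyl]
  exact Finset.prod_congr rfl fun i hi => by rw [halfWeights_add_one (ne_of_mem_of_not_mem hi hs)]

end HalfWeights

lemma isOpenShiftEigenmeasure_iff {μ : Measure (ℤ → Fin 3)} {Λ : ℝ≥0∞} :
    IsOpenShiftEigenmeasure μ Λ ↔
      (μ.map shiftMap).restrict {ε | ε (-1) ≠ 1} = Λ • μ := by
  have hH : MeasurableSet {ε : ℤ → Fin 3 | ε (-1) ≠ 1} :=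
    measurable_pi_apply (-1) (measurableSet_singleton 1).compl
  rw [Measure.ext_iff]
  refine forall₂_congr fun S hS => ?_
  rw [Measure.restrict_apply hS, Measure.map_apply measurable_shiftMap (hS.inter hH),
    preimage_inter, Measure.smul_apply, smul_eq_mul]
  rfl

section Eigenmeasure

variable {P Q : Fin 3 → ℝ} {μ : Measure (ℤ → Fin 3)} {Λ : ℝ≥0∞}

theorem IsProductMeasure.isOpenShiftEigenmeasure [IsFiniteMeasure μ]
    (hμ : IsProductMeasure μ (halfWeights P Q))
    (hPQ : ∀ a, survivingWeight P a = Λ * ENNReal.ofReal (Q a)) :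
    IsOpenShiftEigenmeasure μ Λ := by
  rw [isOpenShiftEigenmeasure_iff]
  refine Measure.ext_of_cyl_of_mem (-1) fun s g hs => ?_
  rw [Measure.restrict_apply (measurableSet_cyl s g),
    hμ.map_shiftMap.measure_cyl_inter_ne_one hs,
    hμ.map_shiftMap_cyl_of_notMem (s.notMem_erase (-1)),
    Measure.smul_apply, smul_eq_mul, hμ.measure_cyl_eq_mul_erase hs, ← mul_assoc]
  simp only [neg_add_cancel, halfWeights_zero, halfWeights_neg_one, hPQ]

theorem IsOpenShiftEigenmeasure.survivingWeight_eq (h : IsOpenShiftEigenmeasure μ Λ)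
    (hμ : IsProductMeasure μ (halfWeights P Q)) (a : Fin 3) :
    survivingWeight P a = Λ * ENNReal.ofReal (Q a) := by
  have h₁ := congrArg (· (cyl {-1} fun _ => a)) (isOpenShiftEigenmeasure_iff.1 h)
  simpa only [Measure.restrict_apply (measurableSet_cyl _ _), Measure.smul_apply, smul_eq_mul,
    hμ.map_shiftMap.measure_cyl_inter_ne_one (Finset.mem_singleton_self _),
    Finset.erase_singleton, hμ.map_shiftMap.measure_cyl, hμ.measure_cyl, Finset.prod_empty,
    Finset.prod_singleton, mul_one, neg_add_cancel, halfWeights_zero,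
    halfWeights_neg_one] using h₁

end Eigenmeasure

/-- The vector `P*` of the statement: `P` conditioned on avoiding the hole letter `1`. -/
noncomputable def condOffHole (P : Fin 3 → ℝ) (i : Fin 3) : ℝ :=
  if i = 1 then 0 else P i / (P 0 + P 2)

section OffHole

variable {P : Fin 3 → ℝ}

lemma survivingWeight_eq_mul_condOffHole (hpos : 0 < P 0 + P 2) (a : Fin 3) :
    survivingWeight P a = ENNReal.ofReal (P 0 + P 2) * ENNReal.ofReal (condOffHole P a) := by
  unfold survivingWeight condOffHole
  split_ifs
  · simp
  · rw [← ENNReal.ofReal_mul hpos.le, mul_div_cancel₀ _ hpos.ne']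

lemma sum_survivingWeight (hP : ∀ i, 0 ≤ P i) :
    ∑ a, survivingWeight P a = ENNReal.ofReal (P 0 + P 2) := by
  simp [Fin.sum_univ_three, survivingWeight, ENNReal.ofReal_add (hP 0) (hP 2)]

lemma eq_condOffHole_of_survivingWeight_eq (hP : ∀ i, 0 ≤ P i) (hpos : 0 < P 0 + P 2)
    {Q : Fin 3 → ℝ} (hQ : ∀ i, 0 ≤ Q i) (hQsum : Q 0 + Q 1 + Q 2 = 1) {Λ : ℝ≥0∞}
    (h : ∀ a, survivingWeight P a = Λ * ENNReal.ofReal (Q a)) :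
    Q = condOffHole P := by
  have hΛ : Λ = ENNReal.ofReal (P 0 + P 2) := by
    have hQ₁ : ∑ a, ENNReal.ofReal (Q a) = 1 := by
      rw [Fin.sum_univ_three, ← ENNReal.ofReal_add (hQ 0) (hQ 1),
        ← ENNReal.ofReal_add (add_nonneg (hQ 0) (hQ 1)) (hQ 2), hQsum, ENNReal.ofReal_one]
    rw [← sum_survivingWeight hP, Finset.sum_congr rfl fun a _ => h a, ← Finset.mul_sum, hQ₁,
      mul_one]
  funext a
  have ha := h a
  rw [survivingWeight_eq_mul_condOffHole hpos, hΛ] at ha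
  have hcond : 0 ≤ condOffHole P a := by
    unfold condOffHole
    split_ifs
    exacts [le_rfl, div_nonneg (hP a) hpos.le]
  exact (ENNReal.ofReal_eq_ofReal_iff (hQ a) hcond).1
    ((ENNReal.mul_right_inj (by simpa using hpos) ENNReal.ofReal_ne_top).1 ha).symm

end OffHole

theorem bernoulli_eigenmeasure_of_open_shift
    (P : Fin 3 → ℝ) (hP : ∀ i, 0 ≤ P i) (hPsum : P 0 + P 1 + P 2 = 1) (hP1 : P 1 < 1)
    (Pstar : Fin 3 → ℝ)
    (hPstar : Pstar = fun i => if i = 1 then 0 else P i / (P 0 + P 2))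
    (μ : Measure (ℤ → Fin 3)) [IsProbabilityMeasure μ]
    (hμ : IsProductMeasure μ (fun n i => if 0 ≤ n then P i else Pstar i)) :
    IsOpenShiftEigenmeasure μ (ENNReal.ofReal (P 0 + P 2)) ∧
    ∀ (Q : Fin 3 → ℝ), (∀ i, 0 ≤ Q i) → Q 0 + Q 1 + Q 2 = 1 →
      ∀ ν : Measure (ℤ → Fin 3), IsProbabilityMeasure ν →
        IsProductMeasure ν (fun n i => if 0 ≤ n then P i else Q i) →
        (∃ Λ : ℝ≥0∞, IsOpenShiftEigenmeasure ν Λ) →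
        Q = Pstar := by
  have hpos : 0 < P 0 + P 2 := by linarith
  subst hPstar
  refine ⟨IsProductMeasure.isOpenShiftEigenmeasure (Q := condOffHole P) hμ
    (survivingWeight_eq_mul_condOffHole hpos), ?_⟩
  rintro Q hQ hQsum ν - hν ⟨Λ, hΛ⟩
  exact eq_condOffHole_of_survivingWeight_eq hP hpos hQ hQsum (hΛ.survivingWeight_eq hν)
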